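/- The heat kernel on hyperbolic 3-space is K_3(t,ρ) = (4πt)^{−3/2} e^{−t} e^{−ρ²/(4t)}·(ρ/sinh ρ), and for all t, ρ > 0, ∂²_ρ log K_3 − coth(ρ)·∂_ρ log K_3 > 0. -/

import Mathlib

/-!
Up to an additive constant, `log K3 t ρ = -ρ²/(4t) + log ρ - log (sinh ρ)`.
Writing `s = sinh ρ`, `c = cosh ρ`, the quantity `∂²_ρ log K3 - coth ρ · ∂_ρ log K3`
equals `(ρc - s)/(2ts) + (2ρ² + ρ²s² - ρsc - s²)/(ρ²s²)`, where we used `c² = 1 + s²`.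
Both numerators are positive for `ρ > 0`: each vanishes at `0` and has positive derivative,
and for the second one this is seen after four differentiations (in the variable `2ρ`).
-/

open Real

/-- The heat kernel on hyperbolic 3-space, as a function of backward time `t > 0`
and hyperbolic distance `ρ > 0`. -/
noncomputable def K3 (t ρ : ℝ) : ℝ :=
  (4 * π * t) ^ (-(3:ℝ)/2) * Real.exp (-t) * Real.exp (-ρ ^ 2 / (4 * t)) * (ρ / Real.sinh ρ)

lemma pos_of_hasDerivAt_pos {f f' : ℝ → ℝ} (hf₀ : f 0 = 0) (hf : ∀ x, HasDerivAt f (f' x) x)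
    (hf' : ∀ x, 0 < x → 0 < f' x) {x : ℝ} (hx : 0 < x) : 0 < f x := by
  have hmono : StrictMonoOn f (Set.Ici 0) := by
    refine strictMonoOn_of_hasDerivWithinAt_pos (convex_Ici 0)
      (fun y _ => (hf y).continuousAt.continuousWithinAt) (fun y _ => (hf y).hasDerivWithinAt) ?_
    rw [interior_Ici]
    exact hf'
  simpa [hf₀] using hmono Set.self_mem_Ici hx.le hx

namespace Real

lemma sinh_lt_mul_cosh {x : ℝ} (hx : 0 < x) : sinh x < x * cosh x := by
  have h := pos_of_hasDerivAt_pos (f := fun x => x * cosh x - sinh x) (f' := fun x => x * sinh x)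
    (by simp) (fun x => ?_) (fun x hx => mul_pos hx (sinh_pos_iff.2 hx)) hx
  · linarith
  refine (((hasDerivAt_id x).mul (hasDerivAt_cosh x)).sub (hasDerivAt_sinh x)).congr_deriv ?_
  simp only [id_eq]
  ring

lemma sq_sub_four_mul_sinh_add_four_mul_cosh_pos {x : ℝ} (hx : 0 < x) :
    0 < (x ^ 2 - 4) * sinh x + 4 * x * cosh x := by
  refine pos_of_hasDerivAt_pos (f := fun x => (x ^ 2 - 4) * sinh x + 4 * x * cosh x)
    (f' := fun x => 6 * x * sinh x + x ^ 2 * cosh x) (by simp)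
    (fun x => ?_) (fun x hx => ?_) hx
  · refine ((((hasDerivAt_pow 2 x).sub_const 4).mul (hasDerivAt_sinh x)).add
      (((hasDerivAt_id x).const_mul 4).mul (hasDerivAt_cosh x))).congr_deriv ?_
    simp only [id_eq]
    ring
  · have := sinh_pos_iff.2 hx
    positivity

lemma six_add_mul_sinh_add_sq_sub_six_mul_cosh_pos {x : ℝ} (hx : 0 < x) :
    0 < 6 + 2 * x * sinh x + (x ^ 2 - 6) * cosh x := by
  refine pos_of_hasDerivAt_pos (f := fun x => 6 + 2 * x * sinh x + (x ^ 2 - 6) * cosh x) (by simp)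
    (fun x => ?_) (fun _ => sq_sub_four_mul_sinh_add_four_mul_cosh_pos) hx
  refine (((hasDerivAt_const x 6).add (((hasDerivAt_id x).const_mul 2).mul (hasDerivAt_sinh x))).add
    (((hasDerivAt_pow 2 x).sub_const 6).mul (hasDerivAt_cosh x))).congr_deriv ?_
  simp only [id_eq]
  ring

lemma six_mul_add_sq_sub_six_mul_sinh_pos {x : ℝ} (hx : 0 < x) :
    0 < 6 * x + (x ^ 2 - 6) * sinh x := by
  refine pos_of_hasDerivAt_pos (f := fun x => 6 * x + (x ^ 2 - 6) * sinh x) (by simp)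
    (fun x => ?_) (fun _ => six_add_mul_sinh_add_sq_sub_six_mul_cosh_pos) hx
  refine (((hasDerivAt_id x).const_mul 6).add
    (((hasDerivAt_pow 2 x).sub_const 6).mul (hasDerivAt_sinh x))).congr_deriv ?_
  ring

lemma two_mul_mul_sinh_lt_sq_sub_four_mul_cosh_add {x : ℝ} (hx : 0 < x) :
    2 * x * sinh x < 3 * x ^ 2 + (x ^ 2 - 4) * cosh x + 4 := by
  have h := pos_of_hasDerivAt_pos
    (f := fun x => 3 * x ^ 2 + (x ^ 2 - 4) * cosh x - 2 * x * sinh x + 4) (by simp) (fun x => ?_)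
    (fun _ => six_mul_add_sq_sub_six_mul_sinh_pos) hx
  · linarith
  refine (((((hasDerivAt_pow 2 x).const_mul 3).add
    (((hasDerivAt_pow 2 x).sub_const 4).mul (hasDerivAt_cosh x))).sub
    (((hasDerivAt_id x).const_mul 2).mul (hasDerivAt_sinh x))).add_const 4).congr_deriv ?_
  simp only [id_eq]
  ring

lemma sinh_sq_add_mul_sinh_mul_cosh_lt {x : ℝ} (hx : 0 < x) :
    sinh x ^ 2 + x * sinh x * cosh x < x ^ 2 * (2 + sinh x ^ 2) := by
  have h := two_mul_mul_sinh_lt_sq_sub_four_mul_cosh_add (mul_pos two_pos hx)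
  rw [cosh_two_mul, sinh_two_mul] at h
  nlinarith [cosh_sq x]

end Real

section K3

variable {t x : ℝ}

lemma log_K3 (ht : 0 < t) (hx : 0 < x) :
    log (K3 t x) =
      log ((4 * π * t) ^ (-(3:ℝ)/2)) - t - x ^ 2 / (4 * t) + log x - log (sinh x) := by
  have hs : 0 < sinh x := sinh_pos_iff.2 hx
  have hπ := pi_pos
  rw [K3, log_mul (by positivity) (div_ne_zero hx.ne' hs.ne'),
    log_mul (by positivity) (exp_ne_zero _), log_mul (by positivity) (exp_ne_zero _),
    log_div hx.ne' hs.ne', log_exp, log_exp]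
  ring

lemma hasDerivAt_log_K3 (ht : 0 < t) (hx : 0 < x) :
    HasDerivAt (fun y => log (K3 t y)) (-(x / (2 * t)) + x⁻¹ - cosh x / sinh x) x := by
  have hs : 0 < sinh x := sinh_pos_iff.2 hx
  have h := ((((hasDerivAt_const x (log ((4 * π * t) ^ (-(3:ℝ)/2)))).sub
    (hasDerivAt_const x t)).sub ((hasDerivAt_pow 2 x).div_const (4 * t))).add
    (hasDerivAt_log hx.ne')).sub ((hasDerivAt_sinh x).log hs.ne')
  refine (h.congr_deriv ?_).congr_of_eventuallyEq
    (Filter.eventually_of_mem (Ioi_mem_nhds hx) fun y hy => log_K3 ht hy)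
  field_simp
  ring

lemma hasDerivAt_deriv_log_K3 (ht : 0 < t) (hx : 0 < x) :
    HasDerivAt (deriv fun y => log (K3 t y)) (-(1 / (2 * t)) - 1 / x ^ 2 + 1 / sinh x ^ 2) x := by
  have hs : 0 < sinh x := sinh_pos_iff.2 hx
  have h := (((hasDerivAt_id x).div_const (2 * t)).neg.add (hasDerivAt_inv hx.ne')).sub
    ((hasDerivAt_cosh x).div (hasDerivAt_sinh x) hs.ne')
  refine (h.congr_deriv ?_).congr_of_eventuallyEq
    (Filter.eventually_of_mem (Ioi_mem_nhds hx) fun y hy => (hasDerivAt_log_K3 ht hy).deriv)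
  rw [show sinh x * sinh x - cosh x * cosh x = -1 by nlinarith [cosh_sq x]]
  field_simp
  ring

end K3

theorem K3_superconvex (t ρ : ℝ) (ht : 0 < t) (hρ : 0 < ρ) :
    0 < deriv (deriv (fun x => Real.log (K3 t x))) ρ -
        (Real.cosh ρ / Real.sinh ρ) * deriv (fun x => Real.log (K3 t x)) ρ := by
  rw [(hasDerivAt_deriv_log_K3 ht hρ).deriv, (hasDerivAt_log_K3 ht hρ).deriv]
  have hs : 0 < sinh ρ := sinh_pos_iff.2 hρ
  have hsplit : -(1 / (2 * t)) - 1 / ρ ^ 2 + 1 / sinh ρ ^ 2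
        - cosh ρ / sinh ρ * (-(ρ / (2 * t)) + ρ⁻¹ - cosh ρ / sinh ρ)
      = (ρ * cosh ρ - sinh ρ) / (2 * t * sinh ρ)
        + (ρ ^ 2 * (2 + sinh ρ ^ 2) - (sinh ρ ^ 2 + ρ * sinh ρ * cosh ρ))
          / (ρ ^ 2 * sinh ρ ^ 2) := by
    field_simp
    linear_combination (2 * t * ρ ^ 2) * cosh_sq ρ
  rw [hsplit]
  have h₁ := sinh_lt_mul_cosh hρ
  have h₂ := sinh_sq_add_mul_sinh_mul_cosh_lt hρ
  exact add_pos (div_pos (by linarith) (by positivity)) (div_pos (by linarith) (by positivity))
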